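/- For every σ > 1/2 and every real t, exp(t²/2 − t⁴π²/(48·V(σ)²)) ≤ E[exp(t·F̄(σ))] ≤ exp(t²/2). -/

import Mathlib

/-!
With `S_N = ∑_{n<N} X_n c_n` and `c_n = n^{-σ}`, independence gives
`E[exp(u S_N)] = ∏_{n<N} cosh(u c_n)`, and `exp(x²/2 - x⁴/8) ≤ cosh x ≤ exp(x²/2)` traps this
product between `exp(u² ∑ c_n² / 2 - u⁴ ∑ c_n⁴ / 8)` and `exp(u² ∑ c_n² / 2)`. Fatou's lemma carries
the upper bound to the almost sure limit `F`; for the lower bound, the uniform bound on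
`E[exp(2u S_N)]` rules out escape of mass to infinity. Finally `∑ c_n² = V(σ)`,
`∑ c_n⁴ ≤ ζ(2) = π²/6`, and `u = t / √V(σ)`.
-/

open MeasureTheory ProbabilityTheory Filter Topology

/-- `V σ = E[F(σ)²] = ∑_{n=1}^∞ n^{-2σ}`. -/
noncomputable def V (σ : ℝ) : ℝ := ∑' n : ℕ, (n : ℝ) ^ (-(2 * σ))

open Real Finset

namespace Real

lemma exp_sub_sq_div_two_le_one_add {y : ℝ} (hy : 0 ≤ y) : exp (y - y ^ 2 / 2) ≤ 1 + y := by
  have hpoly : y - y ^ 2 / 2 ≤ 2 * y / (y + 2) := by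
    rw [le_div_iff₀ (by linarith)]
    nlinarith [pow_nonneg hy 3]
  calc exp (y - y ^ 2 / 2) ≤ exp (log (1 + y)) :=
        exp_le_exp.2 (hpoly.trans (le_log_one_add_of_nonneg hy))
    _ = 1 + y := exp_log (by linarith)

lemma one_add_sq_div_two_le_cosh (x : ℝ) : 1 + x ^ 2 / 2 ≤ cosh x := by
  have hsum : ∑ i ∈ range 2, x ^ (2 * i) / ((2 * i).factorial : ℝ) = 1 + x ^ 2 / 2 := by
    norm_num [sum_range_succ]
  rw [cosh_eq_tsum, ← hsum]
  exact x.hasSum_cosh.summable.sum_le_tsum _ fun i _ => by rw [pow_mul]; positivity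

lemma exp_sq_div_two_sub_le_cosh (x : ℝ) : exp (x ^ 2 / 2 - x ^ 4 / 8) ≤ cosh x :=
  calc exp (x ^ 2 / 2 - x ^ 4 / 8) = exp (x ^ 2 / 2 - (x ^ 2 / 2) ^ 2 / 2) := by ring_nf
    _ ≤ 1 + x ^ 2 / 2 := exp_sub_sq_div_two_le_one_add (by positivity)
    _ ≤ cosh x := one_add_sq_div_two_le_cosh x

end Real

section Rademacher

variable {Ω : Type*} [MeasurableSpace Ω] {μ : Measure Ω}

structure IsRademacher (X : Ω → ℝ) (μ : Measure Ω) : Prop where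
  measurable : Measurable X
  measure_eq_one : μ {ω | X ω = 1} = 1 / 2
  measure_eq_neg_one : μ {ω | X ω = -1} = 1 / 2

namespace IsRademacher

variable {X : Ω → ℝ}

lemma measurableSet_eq (hX : IsRademacher X μ) (a : ℝ) : MeasurableSet {ω | X ω = a} :=
  hX.measurable (measurableSet_singleton a)

variable [IsProbabilityMeasure μ]

lemma ae_eq_one_or_eq_neg_one (hX : IsRademacher X μ) : ∀ᵐ ω ∂μ, X ω = 1 ∨ X ω = -1 := by
  have hdisj : Disjoint {ω | X ω = 1} {ω | X ω = -1} :=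
    Set.disjoint_left.2 fun ω (h : X ω = 1) (h' : X ω = -1) => by linarith
  refine (ae_iff_measure_eq
    ((hX.measurableSet_eq 1).union (hX.measurableSet_eq (-1))).nullMeasurableSet).2 ?_
  change μ ({ω | X ω = 1} ∪ {ω | X ω = -1}) = μ Set.univ
  rw [measure_union hdisj (hX.measurableSet_eq (-1)), hX.measure_eq_one, hX.measure_eq_neg_one,
    ENNReal.add_halves, measure_univ]

lemma comp_ae_eq (hX : IsRademacher X μ) (f : ℝ → ℝ) :
    (fun ω => f (X ω)) =ᵐ[μ] fun ω => f (-1) + (f 1 - f (-1)) * {ω | X ω = 1}.indicator 1 ω := by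
  filter_upwards [hX.ae_eq_one_or_eq_neg_one] with ω hω
  rcases hω with h | h <;> norm_num [Set.indicator, h]

lemma integrable_comp (hX : IsRademacher X μ) (f : ℝ → ℝ) : Integrable (fun ω => f (X ω)) μ :=
  Integrable.congr ((integrable_const _).add (((integrable_const 1).indicator
    (hX.measurableSet_eq 1)).const_mul _)) (hX.comp_ae_eq f).symm

lemma integral_comp (hX : IsRademacher X μ) (f : ℝ → ℝ) :
    ∫ ω, f (X ω) ∂μ = (f 1 + f (-1)) / 2 := by
  rw [integral_congr_ae (hX.comp_ae_eq f), integral_add (integrable_const _)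
    (((integrable_const 1).indicator (hX.measurableSet_eq 1)).const_mul _),
    integral_const_mul, integral_indicator_one (hX.measurableSet_eq 1),
    measureReal_def, hX.measure_eq_one]
  norm_num
  ring

lemma mgf_mul_const (hX : IsRademacher X μ) (c u : ℝ) :
    mgf (fun ω => X ω * c) μ u = cosh (u * c) := by
  rw [mgf, hX.integral_comp (fun x => exp (u * (x * c))), cosh_eq]
  ring_nf

end IsRademacher

variable {ι : Type*} {X : ι → Ω → ℝ}

lemma ProbabilityTheory.iIndepFun.mul_const (hindep : iIndepFun X μ) (c : ι → ℝ) :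
    iIndepFun (fun i ω => X i ω * c i) μ :=
  hindep.comp (fun i x => x * c i) fun i => measurable_id.mul_const (c i)

variable [IsProbabilityMeasure μ]

lemma integrable_exp_mul_sum_rademacher (hX : ∀ i, IsRademacher (X i) μ)
    (hindep : iIndepFun X μ) (c : ι → ℝ) (u : ℝ) (I : Finset ι) :
    Integrable (fun ω => exp (u * ∑ i ∈ I, X i ω * c i)) μ := by
  have hint := (hindep.mul_const c).integrable_exp_mul_sum
    (fun i => (hX i).measurable.mul_const (c i)) (s := I) (t := u)
    fun i _ => (hX i).integrable_comp fun x => exp (u * (x * c i))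
  simpa only [Finset.sum_apply] using hint

lemma integral_exp_mul_sum_rademacher (hX : ∀ i, IsRademacher (X i) μ)
    (hindep : iIndepFun X μ) (c : ι → ℝ) (u : ℝ) (I : Finset ι) :
    ∫ ω, exp (u * ∑ i ∈ I, X i ω * c i) ∂μ = ∏ i ∈ I, cosh (u * c i) := by
  have hsum := (hindep.mul_const c).mgf_sum (fun i => (hX i).measurable.mul_const (c i)) I (t := u)
  simp only [(hX _).mgf_mul_const] at hsum
  rw [← hsum, mgf]
  simp only [Finset.sum_apply]

lemma integral_exp_mul_sum_rademacher_le (hX : ∀ i, IsRademacher (X i) μ)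
    (hindep : iIndepFun X μ) (c : ι → ℝ) (u : ℝ) (I : Finset ι) :
    ∫ ω, exp (u * ∑ i ∈ I, X i ω * c i) ∂μ ≤ exp (u ^ 2 * (∑ i ∈ I, c i ^ 2) / 2) := by
  have hexp : u ^ 2 * (∑ i ∈ I, c i ^ 2) / 2 = ∑ i ∈ I, (u * c i) ^ 2 / 2 := by
    rw [mul_sum, sum_div]
    ring_nf
  rw [integral_exp_mul_sum_rademacher hX hindep, hexp, exp_sum]
  exact prod_le_prod (fun i _ => (cosh_pos _).le) fun i _ => cosh_le_exp_half_sq _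

lemma exp_le_integral_exp_mul_sum_rademacher (hX : ∀ i, IsRademacher (X i) μ)
    (hindep : iIndepFun X μ) (c : ι → ℝ) (u : ℝ) (I : Finset ι) :
    exp (∑ i ∈ I, ((u * c i) ^ 2 / 2 - (u * c i) ^ 4 / 8)) ≤
      ∫ ω, exp (u * ∑ i ∈ I, X i ω * c i) ∂μ := by
  rw [integral_exp_mul_sum_rademacher hX hindep, exp_sum]
  exact prod_le_prod (fun i _ => (exp_pos _).le) fun i _ => exp_sq_div_two_sub_le_cosh _

end Rademacher

section Convergence

variable {Ω : Type*} [MeasurableSpace Ω] {μ : Measure Ω} {f : ℕ → Ω → ℝ} {g : Ω → ℝ}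

lemma integrable_and_integral_le_of_tendsto_ae {C : ℝ} (hf_nonneg : ∀ N, 0 ≤ᵐ[μ] f N)
    (hf : ∀ N, Integrable (f N) μ) (hC : ∀ N, ∫ ω, f N ω ∂μ ≤ C)
    (hfg : ∀ᵐ ω ∂μ, Tendsto (fun N => f N ω) atTop (𝓝 (g ω))) :
    Integrable g μ ∧ ∫ ω, g ω ∂μ ≤ C := by
  have hg_nonneg : 0 ≤ᵐ[μ] g := by
    filter_upwards [hfg, ae_all_iff.2 hf_nonneg] with ω hω hω'
    exact ge_of_tendsto' hω hω'
  have hg_meas : AEStronglyMeasurable g μ :=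
    aestronglyMeasurable_of_tendsto_ae atTop (fun N => (hf N).aestronglyMeasurable) hfg
  have hlint : ∫⁻ ω, ENNReal.ofReal (g ω) ∂μ ≤ ENNReal.ofReal C :=
    calc ∫⁻ ω, ENNReal.ofReal (g ω) ∂μ
        = ∫⁻ ω, liminf (fun N => ENNReal.ofReal (f N ω)) atTop ∂μ := by
          refine lintegral_congr_ae ?_
          filter_upwards [hfg] with ω hω
          exact (ENNReal.tendsto_ofReal hω).liminf_eq.symm
      _ ≤ liminf (fun N => ∫⁻ ω, ENNReal.ofReal (f N ω) ∂μ) atTop :=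
          lintegral_liminf_le' fun N => (hf N).aemeasurable.ennreal_ofReal
      _ ≤ ENNReal.ofReal C := by
          refine liminf_le_of_frequently_le' (Frequently.of_forall fun N => ?_)
          rw [← ofReal_integral_eq_lintegral_ofReal (hf N) (hf_nonneg N)]
          exact ENNReal.ofReal_le_ofReal (hC N)
  have hC_nonneg : 0 ≤ C := (integral_nonneg_of_ae (hf_nonneg 0)).trans (hC 0)
  refine ⟨⟨hg_meas, (hasFiniteIntegral_iff_ofReal hg_nonneg).2
    (hlint.trans_lt ENNReal.ofReal_lt_top)⟩, ?_⟩
  rw [integral_eq_lintegral_of_nonneg_ae hg_nonneg hg_meas]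
  exact ENNReal.toReal_le_of_le_ofReal hC_nonneg hlint

lemma le_min_add_sq_div {x K : ℝ} (hx : 0 ≤ x) (hK : 0 < K) : x ≤ min x K + x ^ 2 / K := by
  rcases le_total x K with h | h
  · rw [min_eq_left h]
    have : 0 ≤ x ^ 2 / K := by positivity
    linarith
  · rw [min_eq_right h]
    have : x ≤ x ^ 2 / K := by rw [le_div_iff₀ hK]; nlinarith
    linarith

lemma le_integral_of_tendsto_ae_of_integral_sq_le [IsFiniteMeasure μ] {a : ℕ → ℝ} {L B : ℝ}
    (hf_nonneg : ∀ N, 0 ≤ᵐ[μ] f N) (hf : ∀ N, Integrable (f N) μ)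
    (hf_sq : ∀ N, Integrable (fun ω => f N ω ^ 2) μ) (hB : ∀ N, ∫ ω, f N ω ^ 2 ∂μ ≤ B)
    (hfg : ∀ᵐ ω ∂μ, Tendsto (fun N => f N ω) atTop (𝓝 (g ω))) (hg : Integrable g μ)
    (ha : Tendsto a atTop (𝓝 L)) (ha_le : ∀ N, a N ≤ ∫ ω, f N ω ∂μ) :
    L ≤ ∫ ω, g ω ∂μ := by
  -- `f ≤ min f K + f² / K`, and the truncations `min (f N) K` converge by dominated convergence.
  have htrunc (K : ℕ) (hK : 0 < K) : L ≤ ∫ ω, g ω ∂μ + B / K := by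
    have hK' : (0 : ℝ) < K := Nat.cast_pos.2 hK
    have hint (N : ℕ) : Integrable (fun ω => min (f N ω) K) μ := (hf N).inf (integrable_const _)
    have hbound (N : ℕ) : a N ≤ ∫ ω, min (f N ω) K ∂μ + B / K :=
      calc a N ≤ ∫ ω, f N ω ∂μ := ha_le N
        _ ≤ ∫ ω, (min (f N ω) K + f N ω ^ 2 / K) ∂μ :=
          integral_mono_of_nonneg (hf_nonneg N) ((hint N).add ((hf_sq N).div_const _)) <| by
            filter_upwards [hf_nonneg N] with ω hω using le_min_add_sq_div hω hK'
        _ = ∫ ω, min (f N ω) K ∂μ + (∫ ω, f N ω ^ 2 ∂μ) / K := by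
          rw [integral_add (hint N) ((hf_sq N).div_const _), integral_div]
        _ ≤ ∫ ω, min (f N ω) K ∂μ + B / K := by gcongr; exact hB N
    have htendsto : Tendsto (fun N => ∫ ω, min (f N ω) K ∂μ) atTop (𝓝 (∫ ω, min (g ω) K ∂μ)) := by
      refine tendsto_integral_of_dominated_convergence (fun _ => (K : ℝ))
        (fun N => (hint N).aestronglyMeasurable) (integrable_const _) (fun N => ?_) ?_
      · filter_upwards [hf_nonneg N] with ω hω
        rw [Real.norm_eq_abs, abs_of_nonneg (le_min hω hK'.le)]
        exact min_le_right _ _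
      · filter_upwards [hfg] with ω hω using hω.min tendsto_const_nhds
    calc L ≤ ∫ ω, min (g ω) K ∂μ + B / K :=
          le_of_tendsto_of_tendsto' ha (htendsto.add_const _) hbound
      _ ≤ ∫ ω, g ω ∂μ + B / K :=
        add_le_add_left (integral_mono (hg.inf (integrable_const _)) hg fun ω => min_le_left _ _) _
  have hlim : Tendsto (fun K : ℕ => ∫ ω, g ω ∂μ + B / K) atTop (𝓝 (∫ ω, g ω ∂μ)) := by
    simpa using (tendsto_const_div_atTop_nhds_zero_nat B).const_add (∫ ω, g ω ∂μ)
  exact ge_of_tendsto hlim ((eventually_gt_atTop 0).mono htrunc)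

end Convergence

lemma Summable.pow_four_of_sq {ι : Type*} {c : ι → ℝ} (hc : Summable fun i => c i ^ 2) :
    Summable fun i => c i ^ 4 :=
  (hc.mul_left (∑' i, c i ^ 2)).of_nonneg_of_le (fun i => by positivity) fun i => by
    rw [show c i ^ 4 = c i ^ 2 * c i ^ 2 by ring]
    exact mul_le_mul_of_nonneg_right (hc.le_tsum i fun j _ => sq_nonneg (c j)) (sq_nonneg _)

section RademacherSeries

variable {Ω : Type*} [MeasurableSpace Ω] {μ : Measure Ω} {X : ℕ → Ω → ℝ} {c : ℕ → ℝ} {F : Ω → ℝ}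

lemma tendsto_exp_mul_of_tendsto_sum
    (hF : ∀ᵐ ω ∂μ, Tendsto (fun N => ∑ n ∈ range N, X n ω * c n) atTop (𝓝 (F ω))) (u : ℝ) :
    ∀ᵐ ω ∂μ, Tendsto (fun N => exp (u * ∑ n ∈ range N, X n ω * c n)) atTop
      (𝓝 (exp (u * F ω))) := by
  filter_upwards [hF] with ω hω using (continuous_exp.tendsto _).comp (hω.const_mul u)

variable [IsProbabilityMeasure μ]

theorem integrable_exp_mul_rademacherSeries_and_integral_le (hX : ∀ n, IsRademacher (X n) μ)
    (hindep : iIndepFun X μ) (hc : Summable fun n => c n ^ 2)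
    (hF : ∀ᵐ ω ∂μ, Tendsto (fun N => ∑ n ∈ range N, X n ω * c n) atTop (𝓝 (F ω))) (u : ℝ) :
    Integrable (fun ω => exp (u * F ω)) μ ∧
      ∫ ω, exp (u * F ω) ∂μ ≤ exp (u ^ 2 * (∑' n, c n ^ 2) / 2) := by
  refine integrable_and_integral_le_of_tendsto_ae
    (fun N => ae_of_all _ fun ω => (exp_pos _).le)
    (fun N => integrable_exp_mul_sum_rademacher hX hindep c u _) (fun N => ?_)
    (tendsto_exp_mul_of_tendsto_sum hF u)
  refine (integral_exp_mul_sum_rademacher_le hX hindep c u _).trans (exp_le_exp.2 ?_)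
  gcongr
  exact hc.sum_le_tsum _ fun n _ => sq_nonneg (c n)

theorem exp_le_integral_exp_mul_rademacherSeries (hX : ∀ n, IsRademacher (X n) μ)
    (hindep : iIndepFun X μ) (hc : Summable fun n => c n ^ 2)
    (hF : ∀ᵐ ω ∂μ, Tendsto (fun N => ∑ n ∈ range N, X n ω * c n) atTop (𝓝 (F ω))) (u : ℝ) :
    exp (u ^ 2 * (∑' n, c n ^ 2) / 2 - u ^ 4 * (∑' n, c n ^ 4) / 8) ≤
      ∫ ω, exp (u * F ω) ∂μ := by
  have hsq (N : ℕ) : (fun ω => exp (u * ∑ n ∈ range N, X n ω * c n) ^ 2) =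
      fun ω => exp (2 * u * ∑ n ∈ range N, X n ω * c n) := by
    funext ω
    rw [← exp_nat_mul]
    ring_nf
  have hsum : HasSum (fun n => (u * c n) ^ 2 / 2 - (u * c n) ^ 4 / 8)
      (u ^ 2 * (∑' n, c n ^ 2) / 2 - u ^ 4 * (∑' n, c n ^ 4) / 8) := by
    rw [show u ^ 2 * (∑' n, c n ^ 2) / 2 - u ^ 4 * (∑' n, c n ^ 4) / 8 =
      u ^ 2 / 2 * ∑' n, c n ^ 2 - u ^ 4 / 8 * ∑' n, c n ^ 4 by ring]
    exact ((hc.hasSum.mul_left _).sub (hc.pow_four_of_sq.hasSum.mul_left _)).congr_fun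
      fun n => by ring
  refine le_integral_of_tendsto_ae_of_integral_sq_le (B := exp ((2 * u) ^ 2 * (∑' n, c n ^ 2) / 2))
    (fun N => ae_of_all _ fun ω => (exp_pos _).le)
    (fun N => integrable_exp_mul_sum_rademacher hX hindep c u _)
    (fun N => hsq N ▸ integrable_exp_mul_sum_rademacher hX hindep c (2 * u) _)
    (fun N => ?_) (tendsto_exp_mul_of_tendsto_sum hF u)
    (integrable_exp_mul_rademacherSeries_and_integral_le hX hindep hc hF u).1
    ((continuous_exp.tendsto _).comp hsum.tendsto_sum_nat)
    (fun N => exp_le_integral_exp_mul_sum_rademacher hX hindep c u _)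
  rw [hsq N]
  exact (integral_exp_mul_sum_rademacher_le hX hindep c (2 * u) _).trans
    (exp_le_exp.2 (by gcongr; exact hc.sum_le_tsum _ fun n _ => sq_nonneg (c n)))

end RademacherSeries

lemma natCast_rpow_neg_pow (σ : ℝ) (n k : ℕ) : ((n : ℝ) ^ (-σ)) ^ k = (n : ℝ) ^ (-(k * σ)) := by
  rw [← Real.rpow_mul_natCast (Nat.cast_nonneg n)]
  ring_nf

lemma hasSum_rpow_neg_sq_V {σ : ℝ} (hσ : 1 / 2 < σ) :
    HasSum (fun n : ℕ => ((n : ℝ) ^ (-σ)) ^ 2) (V σ) := by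
  simp only [natCast_rpow_neg_pow, Nat.cast_ofNat]
  exact (Real.summable_nat_rpow.2 (by linarith)).hasSum

lemma one_le_V {σ : ℝ} (hσ : 1 / 2 < σ) : 1 ≤ V σ := by
  have h := (hasSum_rpow_neg_sq_V hσ).summable.le_tsum 1 fun n _ => sq_nonneg _
  rwa [(hasSum_rpow_neg_sq_V hσ).tsum_eq, Nat.cast_one, Real.one_rpow, one_pow] at h

lemma tsum_rpow_neg_pow_four_le {σ : ℝ} (hσ : 1 / 2 ≤ σ) :
    ∑' n : ℕ, ((n : ℝ) ^ (-σ)) ^ 4 ≤ π ^ 2 / 6 := by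
  have hle (n : ℕ) : ((n : ℝ) ^ (-σ)) ^ 4 ≤ 1 / (n : ℝ) ^ 2 := by
    rcases Nat.eq_zero_or_pos n with rfl | hn
    · simp [Real.zero_rpow (by linarith : -σ ≠ 0)]
    · rw [natCast_rpow_neg_pow, one_div, ← Real.rpow_natCast, ← Real.rpow_neg (Nat.cast_nonneg n)]
      exact Real.rpow_le_rpow_of_exponent_le (Nat.one_le_cast.2 hn) (by push_cast; linarith)
  rw [← hasSum_zeta_two.tsum_eq]
  exact Summable.tsum_le_tsum hle (hasSum_zeta_two.summable.of_nonneg_of_le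
    (fun n => by positivity) hle) hasSum_zeta_two.summable

/-- For `σ > 1/2` and `t ∈ ℝ`,
`exp(t²/2 - t⁴π²/(48 V(σ)²)) ≤ E[exp(t F̄(σ))] ≤ exp(t²/2)`,
where `F̄(σ) = F(σ)/√V(σ)`. -/
theorem mgf_bounds_normalized_dirichlet
    {Ω : Type*} [MeasurableSpace Ω] (μ : Measure Ω) [IsProbabilityMeasure μ]
    (X : ℕ → Ω → ℝ) (hmeas : ∀ n, Measurable (X n))
    (hindep : iIndepFun X μ)
    (h1 : ∀ n, μ {ω | X n ω = 1} = 1/2) (h2 : ∀ n, μ {ω | X n ω = -1} = 1/2)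
    (F : ℝ → Ω → ℝ)
    (hF : ∀ σ : ℝ, 1/2 < σ → ∀ᵐ ω ∂μ,
      Tendsto (fun N : ℕ => ∑ n ∈ Finset.range N, X n ω * (n : ℝ) ^ (-σ))
        atTop (𝓝 (F σ ω)))
    (σ : ℝ) (hσ : 1/2 < σ) (t : ℝ) :
    Real.exp (t ^ 2 / 2 - t ^ 4 * Real.pi ^ 2 / (48 * (V σ) ^ 2)) ≤
      ∫ ω, Real.exp (t * (F σ ω / Real.sqrt (V σ))) ∂μ ∧
    ∫ ω, Real.exp (t * (F σ ω / Real.sqrt (V σ))) ∂μ ≤ Real.exp (t ^ 2 / 2) := by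
  have hX (n : ℕ) : IsRademacher (X n) μ := ⟨hmeas n, h1 n, h2 n⟩
  have hc := hasSum_rpow_neg_sq_V hσ
  have hV : 0 < V σ := one_pos.trans_le (one_le_V hσ)
  set u := t / √(V σ)
  have hu2 : u ^ 2 = t ^ 2 / V σ := by rw [div_pow, Real.sq_sqrt hV.le]
  have hFu (ω : Ω) : t * (F σ ω / √(V σ)) = u * F σ ω := by ring
  simp_rw [hFu]
  have hupper :=
    integrable_exp_mul_rademacherSeries_and_integral_le hX hindep hc.summable (hF σ hσ) u
  refine ⟨le_trans ?_ (exp_le_integral_exp_mul_rademacherSeries hX hindep hc.summable (hF σ hσ) u),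
    hupper.2.trans_eq ?_⟩
  · rw [hc.tsum_eq, exp_le_exp]
    calc t ^ 2 / 2 - t ^ 4 * π ^ 2 / (48 * V σ ^ 2)
        = u ^ 2 * V σ / 2 - u ^ 4 * (π ^ 2 / 6) / 8 := by
          rw [show u ^ 4 = (u ^ 2) ^ 2 by ring, hu2]
          field_simp
          ring
      _ ≤ u ^ 2 * V σ / 2 - u ^ 4 * (∑' n : ℕ, ((n : ℝ) ^ (-σ)) ^ 4) / 8 := by
          gcongr
          exact tsum_rpow_neg_pow_four_le hσ.le
  · rw [hc.tsum_eq, hu2, div_mul_cancel₀ _ hV.ne']
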